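/- arXiv:1906.02649 — 6 statements merged into one kernel-verified Lean document; each statement's English description precedes it below -/
import Mathlib

section
/- Let W be an N×N real matrix with nonnegative entries that is weight-balanced, let L = D − W be its Laplacian, and suppose the digraph induced by W is strongly connected, i.e. for all nodes i, j there exists a finite sequence i = k_0, k_1, …, k_m = j with w_{k_l k_{l+1}} > 0 for every l. If x ∈ ℝᴺ satisfies xᵀL x = 0, then x is a consensus vector: x_i = x_j for all i, j. -/
open Matrix Finset

/-- The out-degree of node `i`: the `i`-th row sum of the weight matrix. -/
def outDeg {N : ℕ} (W : Matrix (Fin N) (Fin N) ℝ) (i : Fin N) : ℝ := ∑ j, W i j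

/-- `W` is weight-balanced if every row sum equals the corresponding column sum. -/
def IsWeightBalanced {N : ℕ} (W : Matrix (Fin N) (Fin N) ℝ) : Prop :=
  ∀ i, (∑ j, W i j) = ∑ j, W j i

/-- The Laplacian `L = D − W`. -/
noncomputable def lap {N : ℕ} (W : Matrix (Fin N) (Fin N) ℝ) : Matrix (Fin N) (Fin N) ℝ :=
  Matrix.diagonal (outDeg W) - W
/-- for weight-balanced nonnegative `W` whose induced digraph is strongly
connected, `xᵀLx = 0` implies `x` is a consensus vector. -/
theorem stmt2 {N : ℕ} (W : Matrix (Fin N) (Fin N) ℝ) (hW : ∀ i j, 0 ≤ W i j)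
    (hWB : IsWeightBalanced W)
    (hconn : ∀ i j : Fin N, ∃ (m : ℕ) (k : ℕ → Fin N),
      k 0 = i ∧ k m = j ∧ ∀ l < m, 0 < W (k l) (k (l + 1)))
    (x : Fin N → ℝ) (hx : x ⬝ᵥ (lap W *ᵥ x) = 0) :
    ∀ i j, x i = x j := by
  set A := ∑ i, ∑ j, W i j * (x i)^2 with hA
  set B := ∑ i, ∑ j, W i j * (x i * x j) with hB
  have hC : (∑ i, ∑ j, W i j * (x j)^2) = A := by
    rw [Finset.sum_comm, hA]
    refine Finset.sum_congr rfl fun j _ => ?_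
    rw [← Finset.sum_mul, ← Finset.sum_mul, ← hWB j]
  have hquad : x ⬝ᵥ (lap W *ᵥ x) = A - B := by
    simp only [lap, dotProduct, mulVec, Matrix.sub_apply, diagonal_apply, outDeg,
      sub_mul, ite_mul, zero_mul]
    rw [hA, hB,
      show (∑ i, ∑ j, W i j * x i ^ 2) - ∑ i, ∑ j, W i j * (x i * x j)
        = ∑ i, ((∑ j, W i j * x i ^ 2) - ∑ j, W i j * (x i * x j))
        by rw [Finset.sum_sub_distrib]]
    refine Finset.sum_congr rfl fun i _ => ?_
    rw [Finset.sum_sub_distrib]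
    simp only [Finset.sum_ite_eq, Finset.mem_univ, if_true]
    rw [mul_sub]
    congr 1
    · rw [show x i * ((∑ j, W i j) * x i) = (∑ j, W i j) * x i ^ 2 by ring,
        Finset.sum_mul]
    · rw [Finset.mul_sum]
      exact Finset.sum_congr rfl fun j _ => by ring
  have hAB : A - B = 0 := by rw [← hquad, hx]
  have hsum0 : ∑ i, ∑ j, W i j * (x i - x j)^2 = 0 := by
    have expand : ∀ i j : Fin N, W i j * (x i - x j)^2
        = W i j * (x i)^2 + W i j * (x j)^2 - 2 * (W i j * (x i * x j)) := by
      intro i j; ring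
    calc ∑ i, ∑ j, W i j * (x i - x j)^2
        = (∑ i, ∑ j, W i j * (x i)^2) + (∑ i, ∑ j, W i j * (x j)^2)
            - 2 * ∑ i, ∑ j, W i j * (x i * x j) := by
          simp_rw [expand, Finset.sum_sub_distrib, Finset.sum_add_distrib,
            ← Finset.mul_sum]
      _ = A + A - 2 * B := by rw [hC]
      _ = 2 * (A - B) := by ring
      _ = 0 := by rw [hAB]; ring
  have hterm : ∀ i j, W i j * (x i - x j)^2 = 0 := by
    have h1 := (Finset.sum_eq_zero_iff_of_nonneg
      (fun i _ => Finset.sum_nonneg fun j _ =>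
        mul_nonneg (hW i j) (sq_nonneg _))).mp hsum0
    intro i j
    exact (Finset.sum_eq_zero_iff_of_nonneg
      (fun j _ => mul_nonneg (hW i j) (sq_nonneg _))).mp
      (h1 i (Finset.mem_univ i)) j (Finset.mem_univ j)
  have hstep : ∀ i j, 0 < W i j → x i = x j := by
    intro i j hpos
    have := hterm i j
    rcases mul_eq_zero.mp this with h | h
    · exact absurd h (ne_of_gt hpos)
    · have := pow_eq_zero_iff (n := 2) (by norm_num) |>.mp h
      linarith [sub_eq_zero.mp this]
  intro i j
  obtain ⟨m, k, hk0, hkm, hpos⟩ := hconn i j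
  have hchain : ∀ l, l ≤ m → x (k l) = x i := by
    intro l hl
    induction l with
    | zero => rw [hk0]
    | succ n ih =>
      have hn : n < m := Nat.lt_of_succ_le hl
      rw [← hstep (k n) (k (n+1)) (hpos n hn)]
      exact ih (le_of_lt hn)
  rw [← hkm]
  exact (hchain m le_rfl).symm
end

section
/- Let W be an N×N real matrix with nonnegative entries that is weight-balanced, with Laplacian L = D − W. Let x̂, e ∈ ℝᴺ, set x = x̂ − e, and let a_1,…,a_N ∈ (0,1). Then −xᵀL x̂ ≤ −(1/2) Σ_{i=1}^N Σ_{j=1}^N w_{ij} [ (1 − a_i)(x̂_i − x̂_j)² − e_i²/a_i ]. -/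
open Matrix Finset

/-!
Write `L x̂` row-wise as `∑ⱼ wᵢⱼ (x̂ᵢ − x̂ⱼ)` and split `−xᵀ L x̂ = eᵀ L x̂ − x̂ᵀ L x̂`. Weight balance
makes the quadratic form `x̂ᵀ L x̂` equal to `½ ∑ᵢⱼ wᵢⱼ (x̂ᵢ − x̂ⱼ)²`, and Young's inequality
`eᵢ (x̂ᵢ − x̂ⱼ) ≤ ½ (aᵢ (x̂ᵢ − x̂ⱼ)² + eᵢ² / aᵢ)`, weighted by `wᵢⱼ ≥ 0`, bounds the cross term.
-/

lemma mul_le_half_mul_sq_add_sq_div {a : ℝ} (ha : 0 < a) (d e : ℝ) :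
    e * d ≤ (a * d ^ 2 + e ^ 2 / a) / 2 := by
  have hsq : 0 ≤ (a * d - e) ^ 2 / a := div_nonneg (sq_nonneg _) ha.le
  have hexpand : (a * d - e) ^ 2 / a = a * d ^ 2 + e ^ 2 / a - 2 * (e * d) := by
    field_simp
    ring
  linarith

section Laplacian

variable {N : ℕ} (W : Matrix (Fin N) (Fin N) ℝ)

lemma lap_mulVec_apply (x : Fin N → ℝ) (i : Fin N) :
    (lap W *ᵥ x) i = ∑ j, W i j * (x i - x j) := by
  rw [lap, sub_mulVec, Pi.sub_apply, mulVec_diagonal, outDeg, sum_mul, mulVec, dotProduct,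
    ← sum_sub_distrib]
  simp only [mul_sub]

lemma dotProduct_lap_mulVec (y x : Fin N → ℝ) :
    y ⬝ᵥ (lap W *ᵥ x) = ∑ i, ∑ j, W i j * (y i * (x i - x j)) := by
  simp only [dotProduct, lap_mulVec_apply, mul_sum]
  exact sum_congr rfl fun i _ => sum_congr rfl fun j _ => by ring

variable {W}

lemma IsWeightBalanced.sum_sum_mul_sq_right (hWB : IsWeightBalanced W) (x : Fin N → ℝ) :
    ∑ i, ∑ j, W i j * x j ^ 2 = ∑ i, ∑ j, W i j * x i ^ 2 := by
  rw [sum_comm]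
  exact sum_congr rfl fun j _ => by rw [← sum_mul, ← sum_mul, hWB j]

lemma IsWeightBalanced.dotProduct_lap_mulVec_self (hWB : IsWeightBalanced W)
    (x : Fin N → ℝ) :
    x ⬝ᵥ (lap W *ᵥ x) = (1 / 2) * ∑ i, ∑ j, W i j * (x i - x j) ^ 2 := by
  have hsplit : ∀ i j, W i j * (x i * (x i - x j))
      = (1 / 2) * (W i j * (x i - x j) ^ 2) + (1 / 2) * (W i j * x i ^ 2)
        - (1 / 2) * (W i j * x j ^ 2) := fun i j => by ring
  simp only [dotProduct_lap_mulVec, hsplit, sum_sub_distrib, sum_add_distrib, ← mul_sum,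
    hWB.sum_sum_mul_sq_right]
  ring

lemma dotProduct_lap_mulVec_le (hW : ∀ i j, 0 ≤ W i j) (e x : Fin N → ℝ) {a : Fin N → ℝ}
    (ha : ∀ i, 0 < a i) :
    e ⬝ᵥ (lap W *ᵥ x) ≤ (1 / 2) * ∑ i, ∑ j, W i j * (a i * (x i - x j) ^ 2 + e i ^ 2 / a i) := by
  rw [dotProduct_lap_mulVec, mul_sum]
  refine sum_le_sum fun i _ => ?_
  rw [mul_sum]
  refine sum_le_sum fun j _ => ?_
  calc W i j * (e i * (x i - x j))
      ≤ W i j * ((a i * (x i - x j) ^ 2 + e i ^ 2 / a i) / 2) :=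
        mul_le_mul_of_nonneg_left (mul_le_half_mul_sq_add_sq_div (ha i) _ _) (hW i j)
    _ = _ := by ring

end Laplacian

/-- for weight-balanced nonnegative `W`, `x = x̂ − e` and `aᵢ ∈ (0,1)`,
`−xᵀLx̂ ≤ −(1/2) ∑ᵢ∑ⱼ wᵢⱼ [(1 − aᵢ)(x̂ᵢ − x̂ⱼ)² − eᵢ²/aᵢ]`. -/
theorem stmt3 {N : ℕ} (W : Matrix (Fin N) (Fin N) ℝ) (hW : ∀ i j, 0 ≤ W i j)
    (hWB : IsWeightBalanced W) (xh e : Fin N → ℝ) (a : Fin N → ℝ)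
    (ha : ∀ i, a i ∈ Set.Ioo (0 : ℝ) 1) :
    -((xh - e) ⬝ᵥ (lap W *ᵥ xh)) ≤
      -(1/2) * ∑ i, ∑ j, W i j * ((1 - a i) * (xh i - xh j)^2 - e i^2 / a i) := by
  have hcross := dotProduct_lap_mulVec_le hW e xh fun i => (ha i).1
  have hquad := hWB.dotProduct_lap_mulVec_self xh
  have hrhs : -(1/2) * ∑ i, ∑ j, W i j * ((1 - a i) * (xh i - xh j)^2 - e i^2 / a i)
      = (1 / 2) * ∑ i, ∑ j, W i j * (a i * (xh i - xh j) ^ 2 + e i ^ 2 / a i)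
        - (1 / 2) * ∑ i, ∑ j, W i j * (xh i - xh j) ^ 2 := by
    have hterm : ∀ i j, W i j * ((1 - a i) * (xh i - xh j)^2 - e i^2 / a i)
        = W i j * (xh i - xh j) ^ 2 - W i j * (a i * (xh i - xh j) ^ 2 + e i ^ 2 / a i) :=
      fun i j => by ring
    simp only [hterm, sum_sub_distrib]
    ring
  rw [sub_dotProduct, hrhs]
  linarith
end

section
/- (Corollary 1.) Let W be an N×N real matrix with nonnegative entries that is weight-balanced, with Laplacian L = D − W, and assume d_i > 0 for all i. Let x̂, e ∈ ℝᴺ, x = x̂ − e, u = −L x̂. Let b_i, c_i > 0, δ_i = 1 − d_i b_i/2 − Σ_j w_{ij} c_j/2, and σ_i ∈ (0,1). If the Algorithm-2 triggering condition e_i² ≤ (2 σ_i δ_i b_i c_i / ((b_i + c_i) d_i)) u_i² holds for every i, then xᵀLᵀu ≤ −Σ_{i=1}^N (1 − σ_i) δ_i ( Σ_{j=1}^N w_{ij}(x̂_i − x̂_j) )², where xᵀLᵀu denotes the inner product of Lx and u. -/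
open Matrix Finset

/-- `δᵢ = 1 − dᵢ bᵢ/2 − ∑ⱼ wᵢⱼ cⱼ/2`. -/
noncomputable def delta {N : ℕ} (W : Matrix (Fin N) (Fin N) ℝ) (b c : Fin N → ℝ)
    (i : Fin N) : ℝ :=
  1 - outDeg W i * b i / 2 - (∑ j, W i j * c j) / 2

lemma lap_apply' {N : ℕ} (W : Matrix (Fin N) (Fin N) ℝ) (v : Fin N → ℝ) (i : Fin N) :
    (lap W *ᵥ v) i = outDeg W i * v i - ∑ j, W i j * v j := by
  simp [lap, Matrix.sub_mulVec, Matrix.mulVec, dotProduct, Matrix.diagonal_apply,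
    ite_mul, Finset.sum_ite_eq, sub_mul, Finset.sum_sub_distrib]

/-- Corollary 1: under the Algorithm-2 trigger
`eᵢ² ≤ (2σᵢδᵢbᵢcᵢ/((bᵢ+cᵢ)dᵢ)) uᵢ²`,
`xᵀLᵀu ≤ −∑ᵢ (1 − σᵢ) δᵢ (∑ⱼ wᵢⱼ(x̂ᵢ − x̂ⱼ))²`. -/
theorem stmt8 {N : ℕ} (W : Matrix (Fin N) (Fin N) ℝ) (hW : ∀ i j, 0 ≤ W i j)
    (hWB : IsWeightBalanced W) (hd : ∀ i, 0 < outDeg W i)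
    (xh e : Fin N → ℝ) (u : Fin N → ℝ) (hu : u = -(lap W *ᵥ xh))
    (b c : Fin N → ℝ) (hb : ∀ i, 0 < b i) (hc : ∀ i, 0 < c i)
    (σ : Fin N → ℝ) (hσ : ∀ i, σ i ∈ Set.Ioo (0 : ℝ) 1)
    (htrig : ∀ i, e i^2 ≤
      (2 * σ i * delta W b c i * b i * c i / ((b i + c i) * outDeg W i)) * (u i)^2) :
    (lap W *ᵥ (xh - e)) ⬝ᵥ u ≤
      -∑ i, (1 - σ i) * delta W b c i * (∑ j, W i j * (xh i - xh j))^2 := by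
  classical
  have hui : ∀ i, u i = -(outDeg W i * xh i - ∑ j, W i j * xh j) := by
    intro i; rw [hu]; simp [lap_apply']
  have hsum : ∀ i, ∑ j, W i j * (xh i - xh j) = outDeg W i * xh i - ∑ j, W i j * xh j := by
    intro i
    simp [mul_sub, Finset.sum_sub_distrib, outDeg, Finset.sum_mul]
  have hsq : ∀ i, (∑ j, W i j * (xh i - xh j))^2 = (u i)^2 := by
    intro i; rw [hsum i, hui i]; ring
  -- rewrite LHS
  have hLHS : (lap W *ᵥ (xh - e)) ⬝ᵥ u
      = (∑ i, (-(u i)^2 - outDeg W i * e i * u i)) + ∑ i, ∑ j, W i j * e j * u i := by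
    rw [dotProduct, ← Finset.sum_add_distrib]
    refine Finset.sum_congr rfl fun i _ => ?_
    rw [show ∑ j, W i j * e j * u i = (∑ j, W i j * e j) * u i from (Finset.sum_mul ..).symm]
    rw [lap_apply', hui i]
    simp only [Pi.sub_apply, mul_sub, Finset.sum_sub_distrib]
    ring
  -- bound the double sum
  have hswap : ∑ i, ∑ j, W i j * (e j^2/(2 * c j)) = ∑ i, outDeg W i * (e i)^2/(2 * c i) := by
    rw [Finset.sum_comm]
    refine Finset.sum_congr rfl fun j _ => ?_
    have hcol : ∑ i, W i j = outDeg W j := (hWB j).symm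
    calc ∑ i, W i j * (e j^2/(2 * c j)) = (∑ i, W i j) * (e j^2/(2 * c j)) := by
          rw [← Finset.sum_mul]
      _ = outDeg W j * (e j)^2/(2 * c j) := by rw [hcol]; ring
  have hT2 : ∑ i, ∑ j, W i j * e j * u i
      ≤ (∑ i, (∑ j, W i j * c j)/2 * (u i)^2) + ∑ i, outDeg W i * (e i)^2/(2 * c i) := by
    calc ∑ i, ∑ j, W i j * e j * u i
        ≤ ∑ i, ∑ j, (W i j * (c j * (u i)^2/2) + W i j * (e j^2/(2*c j))) := by
          refine Finset.sum_le_sum fun i _ => Finset.sum_le_sum fun j _ => ?_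
          have hCj := hc j
          have h1 : e j * u i ≤ c j * (u i)^2/2 + e j^2/(2*c j) := by
            rw [div_add_div _ _ two_ne_zero (by linarith : (2*c j : ℝ) ≠ 0),
              le_div_iff₀ (by nlinarith : (0:ℝ) < 2*(2*c j))]
            nlinarith [sq_nonneg (c j * u i - e j)]
          calc W i j * e j * u i = W i j * (e j * u i) := by ring
            _ ≤ W i j * (c j * (u i)^2/2 + e j^2/(2*c j)) :=
                mul_le_mul_of_nonneg_left h1 (hW i j)
            _ = W i j * (c j * (u i)^2/2) + W i j * (e j^2/(2*c j)) := by ring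
      _ = (∑ i, ∑ j, W i j * (c j * (u i)^2/2)) + ∑ i, ∑ j, W i j * (e j^2/(2*c j)) := by
          rw [← Finset.sum_add_distrib]
          exact Finset.sum_congr rfl fun i _ => Finset.sum_add_distrib
      _ = (∑ i, (∑ j, W i j * c j)/2 * (u i)^2) + ∑ i, outDeg W i * (e i)^2/(2 * c i) := by
          rw [hswap]
          congr 1
          refine Finset.sum_congr rfl fun i _ => ?_
          calc ∑ j, W i j * (c j * (u i)^2/2) = ∑ j, (W i j * c j) * ((u i)^2/2) := by
                refine Finset.sum_congr rfl fun j _ => by ring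
            _ = (∑ j, W i j * c j) * ((u i)^2/2) := by rw [← Finset.sum_mul]
            _ = (∑ j, W i j * c j)/2 * (u i)^2 := by ring
  -- per-index final bound
  have hstep : ∀ i, (-(u i)^2 - outDeg W i * e i * u i)
      + ((∑ j, W i j * c j)/2 * (u i)^2 + outDeg W i * (e i)^2/(2 * c i))
      ≤ -((1 - σ i) * delta W b c i * (u i)^2) := by
    intro i
    have hB := hb i; have hC := hc i; have hD := hd i
    obtain ⟨hs0, hs1⟩ := hσ i
    set D := outDeg W i; set B := b i; set C := c i; set S := ∑ j, W i j * c j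
    set U := u i; set E := e i; set Sg := σ i
    have hdel : delta W b c i = 1 - D * B / 2 - S / 2 := rfl
    have key : D * (B + C) * E^2 ≤ Sg * (2 - D*B - S) * B * C * U^2 := by
      have h := htrig i
      rw [hdel, div_mul_eq_mul_div, le_div_iff₀ (by positivity)] at h
      nlinarith [h]
    have young : -(2*B*C*(D*E*U)) ≤ C*(D*B^2*U^2 + D*E^2) := by
      nlinarith [sq_nonneg (B*U + E), mul_nonneg (mul_nonneg hC.le hD.le) (sq_nonneg (B*U + E))]
    rw [hdel]
    rw [← mul_le_mul_iff_of_pos_right (show (0:ℝ) < 2 * B * C by positivity)]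
    have hexp : ((-(U)^2 - D*E*U) + (S/2 * U^2 + D*E^2/(2*C))) * (2*B*C)
        = -2*B*C*U^2 - 2*B*C*(D*E*U) + B*C*S*U^2 + B*D*E^2 := by
      field_simp; ring
    rw [hexp]
    nlinarith [key, young]
  -- combine
  calc (lap W *ᵥ (xh - e)) ⬝ᵥ u
      = (∑ i, (-(u i)^2 - outDeg W i * e i * u i)) + ∑ i, ∑ j, W i j * e j * u i := hLHS
    _ ≤ (∑ i, (-(u i)^2 - outDeg W i * e i * u i))
        + ((∑ i, (∑ j, W i j * c j)/2 * (u i)^2) + ∑ i, outDeg W i * (e i)^2/(2 * c i)) := by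
        linarith [hT2]
    _ = ∑ i, ((-(u i)^2 - outDeg W i * e i * u i)
        + ((∑ j, W i j * c j)/2 * (u i)^2 + outDeg W i * (e i)^2/(2 * c i))) := by
        rw [← Finset.sum_add_distrib, ← Finset.sum_add_distrib]
    _ ≤ ∑ i, -((1 - σ i) * delta W b c i * (u i)^2) := Finset.sum_le_sum fun i _ => hstep i
    _ = -∑ i, (1 - σ i) * delta W b c i * (∑ j, W i j * (xh i - xh j))^2 := by
        rw [← Finset.sum_neg_distrib]
        exact Finset.sum_congr rfl fun i _ => by rw [hsq i]
end

section
/- Let W be an N×N real matrix with nonnegative entries that is weight-balanced, with Laplacian L = D − W. Let x̂, e ∈ ℝᴺ and x = x̂ − e. Then (1/2) xᵀL x ≤ x̂ᵀL x̂ + ‖L‖ ‖e‖², where ‖L‖ is the operator norm of L induced by the Euclidean norm on ℝᴺ and ‖e‖ is the Euclidean norm of e. -/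
open Matrix Finset

/-- The operator norm of a matrix induced by the Euclidean norm on `ℝᴺ`. -/
noncomputable def opNorm {N : ℕ} (L : Matrix (Fin N) (Fin N) ℝ) : ℝ :=
  ‖Matrix.toEuclideanCLM (𝕜 := ℝ) L‖

lemma quadForm {N : ℕ} (W : Matrix (Fin N) (Fin N) ℝ) (hWB : IsWeightBalanced W)
    (v : Fin N → ℝ) :
    v ⬝ᵥ (lap W *ᵥ v) = (1/2) * ∑ i, ∑ j, W i j * (v i - v j)^2 := by
  have hswap : ∑ i, ∑ j, W i j * v j ^ 2 = ∑ i, ∑ j, W i j * v i ^ 2 := by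
    rw [Finset.sum_comm]
    refine Finset.sum_congr rfl fun j _ => ?_
    rw [← Finset.sum_mul, ← hWB j, Finset.sum_mul]
  have expand : ∀ i j : Fin N, W i j * (v i - v j)^2 =
      (W i j * v i ^ 2 - 2 * (W i j * (v i * v j))) + W i j * v j ^ 2 := by
    intro i j; ring
  have hrhs : ∑ i, ∑ j, W i j * (v i - v j)^2 =
      2 * ((∑ i, ∑ j, W i j * v i ^ 2) - ∑ i, ∑ j, W i j * (v i * v j)) := by
    simp only [expand, Finset.sum_add_distrib, Finset.sum_sub_distrib, ← Finset.mul_sum]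
    rw [hswap]; ring
  rw [hrhs]
  have lhs_eq : v ⬝ᵥ (lap W *ᵥ v) =
      (∑ i, ∑ j, W i j * v i ^ 2) - ∑ i, ∑ j, W i j * (v i * v j) := by
    simp only [lap, dotProduct, mulVec, Matrix.sub_apply, diagonal_apply, outDeg, mul_ite, ite_mul,
      mul_zero, zero_mul, mul_sub, sub_mul, Finset.sum_sub_distrib, Finset.sum_ite_eq,
      Finset.mem_univ, if_true]
    congr 1
    · refine Finset.sum_congr rfl fun i _ => ?_
      rw [Finset.sum_mul, Finset.mul_sum]
      exact Finset.sum_congr rfl fun j _ => by ring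
    · refine Finset.sum_congr rfl fun i _ => ?_
      rw [Finset.mul_sum]
      exact Finset.sum_congr rfl fun j _ => by ring
  rw [lhs_eq]; ring

open scoped RealInnerProductSpace in
lemma rayleigh_bound {N : ℕ} (L : Matrix (Fin N) (Fin N) ℝ) (e : Fin N → ℝ) :
    e ⬝ᵥ (L *ᵥ e) ≤ opNorm L * ∑ i, e i ^ 2 := by
  set T := Matrix.toEuclideanCLM (𝕜 := ℝ) L with hT
  set e' : EuclideanSpace ℝ (Fin N) := (WithLp.equiv 2 _).symm e with he'
  have happ : T e' = (WithLp.equiv 2 _).symm (L *ᵥ e) :=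
    Matrix.toEuclideanCLM_toLp L e
  have h1 : e ⬝ᵥ (L *ᵥ e) = ⟪e', T e'⟫ := by
    rw [happ]
    simp [PiLp.inner_apply, dotProduct, he', WithLp.equiv_symm_apply, mul_comm]
  have h2 : ⟪e', e'⟫ = ∑ i, e i ^ 2 := by
    simp only [he', WithLp.equiv_symm_apply, PiLp.inner_apply, PiLp.toLp_apply]; simp [sq]
  have h3 : ‖e'‖ ^ 2 = ∑ i, e i ^ 2 := by
    rw [← real_inner_self_eq_norm_sq]; exact h2
  calc e ⬝ᵥ (L *ᵥ e) = ⟪e', T e'⟫ := h1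
    _ ≤ ‖e'‖ * ‖T e'‖ := real_inner_le_norm _ _
    _ ≤ ‖e'‖ * (‖T‖ * ‖e'‖) :=
        mul_le_mul_of_nonneg_left (T.le_opNorm e') (norm_nonneg _)
    _ = ‖T‖ * ‖e'‖ ^ 2 := by ring
    _ = opNorm L * ∑ i, e i ^ 2 := by rw [h3, opNorm, hT]

/-- for weight-balanced nonnegative `W` and `x = x̂ − e`,
`(1/2) xᵀLx ≤ x̂ᵀLx̂ + ‖L‖ ‖e‖²`, where `‖e‖² = ∑ᵢ eᵢ²` is the squared Euclidean
norm and `‖L‖` the induced operator norm. -/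
theorem stmt12 {N : ℕ} (W : Matrix (Fin N) (Fin N) ℝ) (hW : ∀ i j, 0 ≤ W i j)
    (hWB : IsWeightBalanced W) (xh e : Fin N → ℝ) :
    (1/2) * ((xh - e) ⬝ᵥ (lap W *ᵥ (xh - e))) ≤
      xh ⬝ᵥ (lap W *ᵥ xh) + opNorm (lap W) * ∑ i, e i^2 := by
  have hq1 := quadForm W hWB (xh - e)
  have hq2 := quadForm W hWB xh
  have hq3 := quadForm W hWB e
  have hb := rayleigh_bound (lap W) e
  have hptw : ∀ i j : Fin N, W i j * ((xh - e) i - (xh - e) j)^2 ≤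
      2 * (W i j * (xh i - xh j)^2) + 2 * (W i j * (e i - e j)^2) := by
    intro i j
    have h := hW i j
    simp only [Pi.sub_apply]
    nlinarith [sq_nonneg ((xh i - xh j) + (e i - e j)), sq_nonneg ((xh i - xh j) - (e i - e j))]
  have hsum : ∑ i, ∑ j, W i j * ((xh - e) i - (xh - e) j)^2 ≤
      2 * (∑ i, ∑ j, W i j * (xh i - xh j)^2) + 2 * (∑ i, ∑ j, W i j * (e i - e j)^2) := by
    calc ∑ i, ∑ j, W i j * ((xh - e) i - (xh - e) j)^2
        ≤ ∑ i, ∑ j, (2 * (W i j * (xh i - xh j)^2) + 2 * (W i j * (e i - e j)^2)) :=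
          Finset.sum_le_sum fun i _ => Finset.sum_le_sum fun j _ => hptw i j
      _ = _ := by simp only [Finset.sum_add_distrib, Finset.mul_sum]
  linarith
end

section
/- Let W be an N×N real matrix with nonnegative entries that is weight-balanced, with Laplacian L = D − W, and assume d_i > 0 for all i. Let x̂, e ∈ ℝᴺ, x = x̂ − e, u = −L x̂. Let b_i, c_i > 0, δ_i = 1 − d_i b_i/2 − Σ_j w_{ij} c_j/2 with δ_i > 0, and σ_i ∈ (0,1). Assume the Algorithm-2 triggering condition e_i² ≤ K_i u_i² holds for every i, where K_i = 2 σ_i δ_i b_i c_i / ((b_i + c_i) d_i), and let K = max_i K_i. Assume further there exists Λ > 0 with ‖L x̂‖² ≤ Λ x̂ᵀL x̂. Then (1/2) xᵀL x ≤ (1 + ‖L‖ K Λ) x̂ᵀL x̂, where ‖L‖ is the operator norm of L induced by the Euclidean norm. -/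
open Matrix Finset

lemma quad_eq {N : ℕ} (W : Matrix (Fin N) (Fin N) ℝ) (hWB : IsWeightBalanced W)
    (z : Fin N → ℝ) :
    z ⬝ᵥ (lap W *ᵥ z) = (1/2) * ∑ i, ∑ j, W i j * (z i - z j)^2 := by
  have hswap : ∑ i, ∑ j, W i j * (z j)^2 = ∑ i, ∑ j, W i j * (z i)^2 := by
    calc ∑ i, ∑ j, W i j * (z j)^2 = ∑ j, ∑ i, W i j * (z j)^2 := Finset.sum_comm
      _ = ∑ j, (∑ i, W i j) * (z j)^2 := by simp [Finset.sum_mul]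
      _ = ∑ j, (∑ i, W j i) * (z j)^2 :=
          Finset.sum_congr rfl fun j _ => by rw [← hWB j]
      _ = ∑ i, ∑ j, W i j * (z i)^2 := by simp [Finset.sum_mul]
  have hdiag : z ⬝ᵥ (Matrix.diagonal (outDeg W) *ᵥ z) = ∑ i, ∑ j, W i j * (z i)^2 := by
    simp only [dotProduct, Matrix.mulVec_diagonal, outDeg]
    refine Finset.sum_congr rfl fun i _ => ?_
    rw [Finset.sum_mul, Finset.mul_sum]
    exact Finset.sum_congr rfl fun j _ => by ring
  have hWpart : z ⬝ᵥ (W *ᵥ z) = ∑ i, ∑ j, W i j * (z i * z j) := by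
    simp only [dotProduct, Matrix.mulVec, Finset.mul_sum]
    exact Finset.sum_congr rfl fun i _ => Finset.sum_congr rfl fun j _ => by ring
  have lhs : z ⬝ᵥ (lap W *ᵥ z)
      = ∑ i, ∑ j, W i j * (z i)^2 - ∑ i, ∑ j, W i j * (z i * z j) := by
    rw [lap, Matrix.sub_mulVec, dotProduct_sub, hdiag, hWpart]
  have rhs : ∑ i, ∑ j, W i j * (z i - z j)^2
      = ∑ i, ∑ j, W i j * (z i)^2 - 2 * ∑ i, ∑ j, W i j * (z i * z j)
        + ∑ i, ∑ j, W i j * (z j)^2 := by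
    have : ∀ i j, W i j * (z i - z j)^2
        = W i j * (z i)^2 - 2 * (W i j * (z i * z j)) + W i j * (z j)^2 :=
      fun i j => by ring
    simp only [this, Finset.sum_add_distrib, Finset.sum_sub_distrib, ← Finset.mul_sum]
  rw [lhs, rhs, hswap]
  ring

lemma quad_nonneg {N : ℕ} (W : Matrix (Fin N) (Fin N) ℝ) (hW : ∀ i j, 0 ≤ W i j)
    (hWB : IsWeightBalanced W) (z : Fin N → ℝ) : 0 ≤ z ⬝ᵥ (lap W *ᵥ z) := by
  rw [quad_eq W hWB z]
  have : 0 ≤ ∑ i, ∑ j, W i j * (z i - z j)^2 :=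
    Finset.sum_nonneg fun i _ => Finset.sum_nonneg fun j _ =>
      mul_nonneg (hW i j) (sq_nonneg _)
  linarith

lemma quad_opNorm_bound {N : ℕ} (L : Matrix (Fin N) (Fin N) ℝ) (e : Fin N → ℝ) :
    e ⬝ᵥ (L *ᵥ e) ≤ opNorm L * ∑ i, (e i)^2 := by
  set v : EuclideanSpace ℝ (Fin N) := (WithLp.equiv 2 _).symm e with hv
  have hnv : ‖v‖^2 = ∑ i, (e i)^2 := by
    rw [EuclideanSpace.norm_eq, Real.sq_sqrt (Finset.sum_nonneg fun i _ => sq_nonneg _)]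
    simp [hv, sq_abs]
  have happ : Matrix.toEuclideanCLM (𝕜 := ℝ) L v = (WithLp.equiv 2 _).symm (L *ᵥ e) :=
    Matrix.toEuclideanCLM_toLp L e
  set w : EuclideanSpace ℝ (Fin N) := (WithLp.equiv 2 _).symm (L *ᵥ e) with hw
  have hinner : e ⬝ᵥ (L *ᵥ e) = inner ℝ v w := by
    rw [PiLp.inner_apply]
    simp [dotProduct, hv, hw, RCLike.inner_apply, mul_comm]
  have h1 : inner ℝ v w ≤ ‖v‖ * ‖w‖ := real_inner_le_norm v w
  have h2 : ‖w‖ ≤ opNorm L * ‖v‖ := by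
    rw [← happ]; exact (Matrix.toEuclideanCLM (𝕜 := ℝ) L).le_opNorm v
  have h3 : ‖v‖ * ‖w‖ ≤ ‖v‖ * (opNorm L * ‖v‖) :=
    mul_le_mul_of_nonneg_left h2 (norm_nonneg v)
  calc e ⬝ᵥ (L *ᵥ e) ≤ ‖v‖ * ‖w‖ := hinner ▸ h1
    _ ≤ ‖v‖ * (opNorm L * ‖v‖) := h3
    _ = opNorm L * ∑ i, (e i)^2 := by rw [← hnv]; ring

/-- under the Algorithm-2 trigger `eᵢ² ≤ Kᵢ uᵢ²` with
`Kᵢ = 2σᵢδᵢbᵢcᵢ/((bᵢ+cᵢ)dᵢ)`, `K = maxᵢ Kᵢ`, and `‖Lx̂‖² ≤ Λ x̂ᵀLx̂` with `Λ > 0`,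
one has `(1/2) xᵀLx ≤ (1 + ‖L‖ K Λ) x̂ᵀLx̂`. -/
theorem stmt13 {N : ℕ} (W : Matrix (Fin N) (Fin N) ℝ) (hW : ∀ i j, 0 ≤ W i j)
    (hWB : IsWeightBalanced W) (hd : ∀ i, 0 < outDeg W i)
    (xh e : Fin N → ℝ) (u : Fin N → ℝ) (hu : u = -(lap W *ᵥ xh))
    (b c : Fin N → ℝ) (hb : ∀ i, 0 < b i) (hc : ∀ i, 0 < c i)
    (hδ : ∀ i, 0 < delta W b c i)
    (σ : Fin N → ℝ) (hσ : ∀ i, σ i ∈ Set.Ioo (0 : ℝ) 1)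
    (htrig : ∀ i, e i^2 ≤
      (2 * σ i * delta W b c i * b i * c i / ((b i + c i) * outDeg W i)) * (u i)^2)
    (K : ℝ) (hK : IsGreatest
      (Set.range fun i =>
        2 * σ i * delta W b c i * b i * c i / ((b i + c i) * outDeg W i)) K)
    (Λ : ℝ) (hΛ : 0 < Λ)
    (hLx : ∑ i, ((lap W *ᵥ xh) i)^2 ≤ Λ * (xh ⬝ᵥ (lap W *ᵥ xh))) :
    (1/2) * ((xh - e) ⬝ᵥ (lap W *ᵥ (xh - e))) ≤
      (1 + opNorm (lap W) * K * Λ) * (xh ⬝ᵥ (lap W *ᵥ xh)) := by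
  set L := lap W with hL
  -- bilinear expansion identity
  have hexp : (xh - e) ⬝ᵥ (L *ᵥ (xh - e)) + (xh + e) ⬝ᵥ (L *ᵥ (xh + e))
      = 2 * (xh ⬝ᵥ (L *ᵥ xh)) + 2 * (e ⬝ᵥ (L *ᵥ e)) := by
    simp only [Matrix.mulVec_sub, Matrix.mulVec_add, dotProduct_sub,
      dotProduct_add, sub_dotProduct, add_dotProduct]
    ring
  have hsum_nonneg := quad_nonneg W hW hWB (xh + e)
  have hxlx := quad_nonneg W hW hWB xh
  have hhalf : (1/2) * ((xh - e) ⬝ᵥ (L *ᵥ (xh - e)))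
      ≤ xh ⬝ᵥ (L *ᵥ xh) + e ⬝ᵥ (L *ᵥ e) := by linarith
  -- K positivity
  have hKpos : 0 ≤ K := by
    obtain ⟨i, hi⟩ := hK.1
    have hpos : 0 < 2 * σ i * delta W b c i * b i * c i / ((b i + c i) * outDeg W i) := by
      apply div_pos
      · have := (hσ i).1; have := hδ i; have := hb i; have := hc i; positivity
      · have := hb i; have := hc i; have := hd i; positivity
    rw [← hi]; exact hpos.le
  -- sum of errors bound
  have hesum : ∑ i, (e i)^2 ≤ K * (Λ * (xh ⬝ᵥ (L *ᵥ xh))) := by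
    have step : ∑ i, (e i)^2 ≤ K * ∑ i, ((L *ᵥ xh) i)^2 := by
      rw [Finset.mul_sum]
      refine Finset.sum_le_sum fun i _ => ?_
      have h1 := htrig i
      have h2 : 2 * σ i * delta W b c i * b i * c i / ((b i + c i) * outDeg W i) ≤ K :=
        hK.2 ⟨i, rfl⟩
      have hui : (u i)^2 = ((L *ᵥ xh) i)^2 := by rw [hu]; simp [neg_sq]
      calc (e i)^2 ≤ _ * (u i)^2 := h1
        _ ≤ K * (u i)^2 := mul_le_mul_of_nonneg_right h2 (sq_nonneg _)
        _ = K * ((L *ᵥ xh) i)^2 := by rw [hui]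
    calc ∑ i, (e i)^2 ≤ K * ∑ i, ((L *ᵥ xh) i)^2 := step
      _ ≤ K * (Λ * (xh ⬝ᵥ (L *ᵥ xh))) := mul_le_mul_of_nonneg_left hLx hKpos
  -- error quadratic form bound
  have heLe : e ⬝ᵥ (L *ᵥ e) ≤ opNorm L * (K * (Λ * (xh ⬝ᵥ (L *ᵥ xh)))) := by
    calc e ⬝ᵥ (L *ᵥ e) ≤ opNorm L * ∑ i, (e i)^2 := quad_opNorm_bound L e
      _ ≤ opNorm L * (K * (Λ * (xh ⬝ᵥ (L *ᵥ xh)))) :=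
        mul_le_mul_of_nonneg_left hesum (norm_nonneg _)
  calc (1/2) * ((xh - e) ⬝ᵥ (L *ᵥ (xh - e)))
      ≤ xh ⬝ᵥ (L *ᵥ xh) + e ⬝ᵥ (L *ᵥ e) := hhalf
    _ ≤ xh ⬝ᵥ (L *ᵥ xh) + opNorm L * (K * (Λ * (xh ⬝ᵥ (L *ᵥ xh)))) := by linarith
    _ = (1 + opNorm L * K * Λ) * (xh ⬝ᵥ (L *ᵥ xh)) := by ring
end

section
/- Let W be an N×N real matrix with nonnegative entries that is weight-balanced, with Laplacian L = D − W, and assume d_i > 0 for all i. Let x̂, e ∈ ℝᴺ, x = x̂ − e, u = −L x̂. Let b_i, c_i > 0, δ_i = 1 − d_i b_i/2 − Σ_j w_{ij} c_j/2 with δ_i > 0, and σ_i ∈ (0,1). Assume the Algorithm-2 triggering condition e_i² ≤ (2 σ_i δ_i b_i c_i / ((b_i + c_i) d_i)) u_i² holds for every i, and assume there exists μ > 0 with μ x̂ᵀL x̂ ≤ ‖L x̂‖². Then xᵀLᵀu ≤ −m μ x̂ᵀL x̂, where m = min_i (1 − σ_i) δ_i > 0 and xᵀLᵀu denotes the inner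 product of Lx and u. -/
open Matrix Finset

lemma young_aux (p q β : ℝ) (hβ : 0 < β) : p * q ≤ p^2/(2*β) + β * q^2/2 := by
  have h : p * q - β * q^2/2 ≤ p^2/(2*β) := by
    rw [le_div_iff₀ (by positivity)]
    nlinarith [sq_nonneg (p - β*q)]
  linarith

/-- under the Algorithm-2 trigger, with `m = minᵢ (1 − σᵢ)δᵢ` and
`μ > 0` such that `μ x̂ᵀLx̂ ≤ ‖Lx̂‖²`, one has `m > 0` and
`xᵀLᵀu ≤ −mμ x̂ᵀLx̂`. -/
theorem stmt14 {N : ℕ} (W : Matrix (Fin N) (Fin N) ℝ) (hW : ∀ i j, 0 ≤ W i j)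
    (hWB : IsWeightBalanced W) (hd : ∀ i, 0 < outDeg W i)
    (xh e : Fin N → ℝ) (u : Fin N → ℝ) (hu : u = -(lap W *ᵥ xh))
    (b c : Fin N → ℝ) (hb : ∀ i, 0 < b i) (hc : ∀ i, 0 < c i)
    (hδ : ∀ i, 0 < delta W b c i)
    (σ : Fin N → ℝ) (hσ : ∀ i, σ i ∈ Set.Ioo (0 : ℝ) 1)
    (htrig : ∀ i, e i^2 ≤
      (2 * σ i * delta W b c i * b i * c i / ((b i + c i) * outDeg W i)) * (u i)^2)
    (μ : ℝ) (hμ : 0 < μ)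
    (hLx : μ * (xh ⬝ᵥ (lap W *ᵥ xh)) ≤ ∑ i, ((lap W *ᵥ xh) i)^2)
    (m : ℝ) (hm : IsLeast (Set.range fun i => (1 - σ i) * delta W b c i) m) :
    0 < m ∧
    (lap W *ᵥ (xh - e)) ⬝ᵥ u ≤ -(m * μ) * (xh ⬝ᵥ (lap W *ᵥ xh)) := by
  obtain ⟨⟨i0, hi0⟩, hlb⟩ := hm
  have hm0 : 0 < m := by
    rw [← hi0]
    have h1 := (hσ i0).2
    exact mul_pos (by linarith) (hδ i0)
  refine ⟨hm0, ?_⟩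
  set v : Fin N → ℝ := lap W *ᵥ xh with hv
  have hue : u = -v := hu
  have husq : ∀ i, (u i)^2 = (v i)^2 := by
    intro i; rw [hue]; simp [neg_sq]
  have hLe : ∀ i, (lap W *ᵥ e) i = outDeg W i * e i - ∑ j, W i j * e j := by
    intro i
    rw [show lap W = Matrix.diagonal (outDeg W) - W from rfl, Matrix.sub_mulVec]
    simp [Matrix.mulVec, dotProduct, Matrix.diagonal_apply, ite_mul, Finset.sum_ite_eq]
  -- left-hand side
  have hlhs : (lap W *ᵥ (xh - e)) ⬝ᵥ u
      = -(∑ i, (v i)^2) + (lap W *ᵥ e) ⬝ᵥ v := by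
    rw [hue, Matrix.mulVec_sub]
    rw [show lap W *ᵥ xh = v from rfl]
    rw [sub_dotProduct, dotProduct_neg, dotProduct_neg]
    have : v ⬝ᵥ v = ∑ i, (v i)^2 := by
      simp [dotProduct, sq]
    rw [this]; ring
  -- per-i trigger bound
  have h3 : ∀ i, outDeg W i * (e i^2/(2*b i)) + outDeg W i * (e i^2/(2*c i))
      ≤ σ i * delta W b c i * (v i)^2 := by
    intro i
    have ht := htrig i
    rw [husq i] at ht
    have hb' := (hb i).ne'
    have hc' := (hc i).ne'
    have hd' := (hd i).ne'
    have hbc : b i + c i ≠ 0 := by have := hb i; have := hc i; positivity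
    have hP : 0 < outDeg W i * (b i + c i) / (2 * b i * c i) := by
      have := hb i; have := hc i; have := hd i; positivity
    have key : outDeg W i * (b i + c i) / (2 * b i * c i) *
        ((2 * σ i * delta W b c i * b i * c i / ((b i + c i) * outDeg W i)) * (v i)^2)
        = σ i * delta W b c i * (v i)^2 := by
      field_simp
    calc outDeg W i * (e i^2/(2*b i)) + outDeg W i * (e i^2/(2*c i))
        = outDeg W i * (b i + c i) / (2 * b i * c i) * (e i^2) := by
          field_simp
          ring
      _ ≤ outDeg W i * (b i + c i) / (2 * b i * c i) *
          ((2 * σ i * delta W b c i * b i * c i / ((b i + c i) * outDeg W i)) * (v i)^2) :=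
          mul_le_mul_of_nonneg_left ht hP.le
      _ = σ i * delta W b c i * (v i)^2 := key
  -- bound (Le) ⬝ v
  have hbound : (lap W *ᵥ e) ⬝ᵥ v
      ≤ ∑ i, (σ i * delta W b c i + (1 - delta W b c i)) * (v i)^2 := by
    have hdot : (lap W *ᵥ e) ⬝ᵥ v
        = (∑ i, outDeg W i * e i * v i) - ∑ i, ∑ j, W i j * e j * v i := by
      simp only [dotProduct, hLe, sub_mul, Finset.sum_sub_distrib, Finset.sum_mul]
    rw [hdot]
    have h1 : ∑ i, outDeg W i * e i * v i
        ≤ ∑ i, (outDeg W i * (e i^2/(2*b i)) + outDeg W i * b i / 2 * (v i)^2) := by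
      apply Finset.sum_le_sum
      intro i _
      have hy := young_aux (e i) (v i) (b i) (hb i)
      calc outDeg W i * e i * v i = outDeg W i * (e i * v i) := by ring
        _ ≤ outDeg W i * (e i^2/(2*b i) + b i * (v i)^2/2) :=
            mul_le_mul_of_nonneg_left hy (hd i).le
        _ = outDeg W i * (e i^2/(2*b i)) + outDeg W i * b i / 2 * (v i)^2 := by ring
    have h2 : -(∑ i, ∑ j, W i j * e j * v i)
        ≤ ∑ i, ∑ j, (W i j * (e j^2/(2*c j)) + W i j * (c j * (v i)^2/2)) := by
      rw [← Finset.sum_neg_distrib]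
      apply Finset.sum_le_sum
      intro i _
      rw [← Finset.sum_neg_distrib]
      apply Finset.sum_le_sum
      intro j _
      have hy := young_aux (e j) (-(v i)) (c j) (hc j)
      calc -(W i j * e j * v i) = W i j * (e j * -(v i)) := by ring
        _ ≤ W i j * (e j^2/(2*c j) + c j * (-(v i))^2/2) :=
            mul_le_mul_of_nonneg_left hy (hW i j)
        _ = W i j * (e j^2/(2*c j)) + W i j * (c j * (v i)^2/2) := by ring
    -- rewrite the double sums
    have hswap : ∑ i, ∑ j, (W i j * (e j^2/(2*c j)) + W i j * (c j * (v i)^2/2))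
        = (∑ i, outDeg W i * (e i^2/(2*c i))) + ∑ i, (∑ j, W i j * c j)/2 * (v i)^2 := by
      rw [show (∑ i, ∑ j, (W i j * (e j^2/(2*c j)) + W i j * (c j * (v i)^2/2)))
          = (∑ i, ∑ j, W i j * (e j^2/(2*c j))) + ∑ i, ∑ j, W i j * (c j * (v i)^2/2) by
        rw [← Finset.sum_add_distrib]
        exact Finset.sum_congr rfl fun i _ => by rw [← Finset.sum_add_distrib]]
      congr 1
      · rw [Finset.sum_comm]
        apply Finset.sum_congr rfl
        intro j _
        rw [← Finset.sum_mul]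
        congr 1
        rw [← hWB j]
        rfl
      · apply Finset.sum_congr rfl
        intro i _
        rw [Finset.sum_div, Finset.sum_mul]
        apply Finset.sum_congr rfl
        intro j _
        ring
    have hfinal : (∑ i, (outDeg W i * (e i^2/(2*b i)) + outDeg W i * b i / 2 * (v i)^2))
        + ((∑ i, outDeg W i * (e i^2/(2*c i))) + ∑ i, (∑ j, W i j * c j)/2 * (v i)^2)
        ≤ ∑ i, (σ i * delta W b c i + (1 - delta W b c i)) * (v i)^2 := by
      rw [← Finset.sum_add_distrib, ← Finset.sum_add_distrib]
      apply Finset.sum_le_sum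
      intro i _
      have h3i := h3 i
      have : (1 : ℝ) - delta W b c i
          = outDeg W i * b i / 2 + (∑ j, W i j * c j)/2 := by
        simp [delta]; ring
      rw [this]
      nlinarith [h3i]
    linarith [h1, h2, hswap ▸ h2]
  -- assemble
  have hB : m * ∑ i, (v i)^2 ≤ ∑ i, (1 - σ i) * delta W b c i * (v i)^2 := by
    rw [Finset.mul_sum]
    apply Finset.sum_le_sum
    intro i _
    exact mul_le_mul_of_nonneg_right (hlb ⟨i, rfl⟩) (sq_nonneg _)
  have hsplit : ∑ i, (σ i * delta W b c i + (1 - delta W b c i)) * (v i)^2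
      = (∑ i, (v i)^2) - ∑ i, (1 - σ i) * delta W b c i * (v i)^2 := by
    rw [← Finset.sum_sub_distrib]
    apply Finset.sum_congr rfl
    intro i _
    ring
  have hC : m * (μ * (xh ⬝ᵥ v)) ≤ m * ∑ i, (v i)^2 :=
    mul_le_mul_of_nonneg_left hLx hm0.le
  rw [hlhs]
  rw [hsplit] at hbound
  linarith
end
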